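/- arXiv:1708.07372 — 3 statements merged into one kernel-verified Lean document; each statement's English description precedes it below -/
import Mathlib

section
/- Let C be a nonempty d-clutter on a finite vertex set V. The simplicial complex ⟨C⟩ is d-chorded if and only if for every d-cycle Ω all of whose d-faces are circuits of C, the set of facets of Ω is the symmetric difference of a finite family of complete subclutters of C, each consisting of all (d+1)-subsets of some (d+2)-element subset of V(Ω). -/
/-!
View a set of `d`-faces as its indicator chain over `𝔽₂`, so that symmetric difference becomes
addition. If `⟨C⟩` is `d`-chorded, induct on the number of vertices of a cycle `Ω ⊆ C`: peel
face-minimal cycles off `Ω` (what remains is an even chain, and each connected component of a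
nonempty even chain is a cycle). A complete face-minimal cycle is the boundary of a single
`(d+1)`-simplex, and an incomplete one is, by chordedness, the sum of cycles on fewer vertices.
Conversely, the simplex boundaries of a decomposition are themselves chords: a cycle on `d + 2`
vertices is complete, so each boundary has fewer vertices than an incomplete `Ω`, and a single
boundary cannot make up `Ω`.
-/

namespace ClutterPaper

variable {α : Type*} [DecidableEq α]

/-- `C` is a uniform clutter on vertex set `V` all of whose circuits have cardinality `c`
(i.e. a `(c-1)`-dimensional uniform clutter). -/
def IsClutter (V : Finset α) (c : ℕ) (C : Finset (Finset α)) : Prop :=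
  ∀ F ∈ C, F ⊆ V ∧ F.card = c

/-- The complement clutter `C̄`: all `c`-subsets of `V` not in `C`. -/
def compClutter (V : Finset α) (c : ℕ) (C : Finset (Finset α)) : Finset (Finset α) :=
  V.powersetCard c \ C

/-- `C^∨ = { V \ F | F ∈ C̄ }`. -/
def clutterDual (V : Finset α) (c : ℕ) (C : Finset (Finset α)) : Finset (Finset α) :=
  (compClutter V c C).image fun F => V \ F

/-- `A` is a clique of the clutter `C` (with circuit cardinality `c`) on vertex set `V`:
all `c`-subsets of `A` are circuits. -/
def IsClique (V : Finset α) (c : ℕ) (C : Finset (Finset α)) (A : Finset α) : Prop :=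
  A ⊆ V ∧ ∀ F ⊆ A, F.card = c → F ∈ C

/-- The closed neighborhood `N_C[e] = e ∪ { v ∈ V | e ∪ {v} ∈ C }`. -/
def closedNbhd (V : Finset α) (C : Finset (Finset α)) (e : Finset α) : Finset α :=
  e ∪ V.filter fun v => insert v e ∈ C

/-- `e` is a maximal subcircuit of the clutter `C` with circuit cardinality `c`:
`e` has cardinality `c - 1` and is contained in some circuit. -/
def IsMS (c : ℕ) (C : Finset (Finset α)) (e : Finset α) : Prop :=
  e.card + 1 = c ∧ ∃ F ∈ C, e ⊆ F

/-- `e` is a simplicial maximal subcircuit: a maximal subcircuit whose closed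
neighborhood is a clique. -/
def IsSMS (V : Finset α) (c : ℕ) (C : Finset (Finset α)) (e : Finset α) : Prop :=
  IsMS c C e ∧ IsClique V c C (closedNbhd V C e)

/-- `e` is a free maximal subcircuit: contained in exactly one circuit. -/
def IsFreeMS (c : ℕ) (C : Finset (Finset α)) (e : Finset α) : Prop :=
  e.card + 1 = c ∧ ∃! F, F ∈ C ∧ e ⊆ F

/-- Deletion `C − e` of a maximal subcircuit: the circuits not containing `e`. -/
def delMS (C : Finset (Finset α)) (e : Finset α) : Finset (Finset α) :=
  C.filter fun F => ¬ e ⊆ F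

/-- Deletion of a vertex: circuits (or faces) not containing `v`. -/
def delVert (C : Finset (Finset α)) (v : α) : Finset (Finset α) :=
  C.filter fun F => v ∉ F

/-- Chordality of a uniform clutter (circuit cardinality `c`) on `V`: there is a sequence of
deletions of simplicial maximal subcircuits ending in the clutter with no circuits. -/
inductive Chordal (V : Finset α) (c : ℕ) : Finset (Finset α) → Prop
  | empty : Chordal V c ∅
  | step {C : Finset (Finset α)} (e : Finset α) :
      IsSMS V c C e → Chordal V c (delMS C e) → Chordal V c C

/-- The ascent `C⁺` of a clutter with circuit cardinality `c`: all `(c+1)`-subsets of `V`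
that are cliques of `C`. -/
def ascent (V : Finset α) (c : ℕ) (C : Finset (Finset α)) : Finset (Finset α) :=
  (V.powersetCard (c + 1)).filter fun A => A.powersetCard c ⊆ C

/-- The simplicial complex `⟨D⟩` generated by a clutter `D`: all subsets of its elements. -/
def complexOf (D : Finset (Finset α)) : Finset (Finset α) :=
  D.biUnion Finset.powerset

/-- A family of finsets is a simplicial complex if it is downward closed. -/
def IsComplex (Δ : Finset (Finset α)) : Prop :=
  ∀ F ∈ Δ, ∀ G ⊆ F, G ∈ Δ

/-- The facets (maximal faces) of a simplicial complex. -/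
def facets (Δ : Finset (Finset α)) : Finset (Finset α) :=
  Δ.filter fun F => ∀ G ∈ Δ, F ⊆ G → F = G

/-- `link_Δ(v) = { F \ {v} | v ∈ F ∈ Δ }`. -/
def link (Δ : Finset (Finset α)) (v : α) : Finset (Finset α) :=
  (Δ.filter fun F => v ∈ F).image fun F => F.erase v

/-- `v` is a shedding vertex of `Δ`: no face of `link_Δ(v)` is a facet of `Δ − v`. -/
def Shedding (Δ : Finset (Finset α)) (v : α) : Prop :=
  ∀ F ∈ link Δ v, F ∉ facets (delVert Δ v)

/-- Alexander dual of a simplicial complex on vertex set `V`: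
`Δ^∨ = { V \ F | F ⊆ V, F ∉ Δ }`. -/
def alexDual (V : Finset α) (Δ : Finset (Finset α)) : Finset (Finset α) :=
  (V.powerset.filter fun F => F ∉ Δ).image fun F => V \ F

/-- `Δ` is pure with all facets of cardinality `c` (dimension `c - 1`), and nonempty. -/
def PureDim (Δ : Finset (Finset α)) (c : ℕ) : Prop :=
  Δ.Nonempty ∧ ∀ F ∈ facets Δ, F.card = c

/-- Vertex decomposability of a simplicial complex. -/
inductive VDecomp : Finset (Finset α) → Prop
  | simplex {Δ : Finset (Finset α)} : (facets Δ).card = 1 → VDecomp Δ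
  | shed {Δ : Finset (Finset α)} (v : α) : Shedding Δ v →
      VDecomp (link Δ v) → VDecomp (delVert Δ v) → VDecomp Δ

/-- The vertex set of a clutter (or of the complex it generates). -/
def vertexSet (Ω : Finset (Finset α)) : Finset α :=
  Ω.biUnion id

/-- `Ω` (given by its set of facets, each of cardinality `d+1`) is a `d`-cycle:
nonempty, pure of dimension `d`, `d`-path connected, and every `(d-1)`-dimensional
face lies in an even number of `d`-faces. -/
def IsCycle (d : ℕ) (Ω : Finset (Finset α)) : Prop :=
  Ω.Nonempty ∧ (∀ F ∈ Ω, F.card = d + 1) ∧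
    (∀ F ∈ Ω, ∀ G ∈ Ω,
      Relation.ReflTransGen (fun A B => A ∈ Ω ∧ B ∈ Ω ∧ (A ∩ B).card = d) F G) ∧
    ∀ e : Finset α, e.card = d → Even ((Ω.filter fun F => e ⊆ F).card)

/-- A face-minimal `d`-cycle: no `d`-cycle has a strictly smaller set of `d`-faces. -/
def FaceMinimalCycle (d : ℕ) (Ω : Finset (Finset α)) : Prop :=
  IsCycle d Ω ∧ ∀ Ω' : Finset (Finset α), IsCycle d Ω' → Ω' ⊆ Ω → Ω' = Ω

/-- `Ω` is `d`-complete: it contains every `(d+1)`-subset of its vertex set. -/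
def DComplete (d : ℕ) (Ω : Finset (Finset α)) : Prop :=
  ∀ F ⊆ vertexSet Ω, F.card = d + 1 → F ∈ Ω

/-- The complex `⟨C⟩` generated by the `d`-dimensional clutter `C` is `d`-chorded. -/
def Chorded (d : ℕ) (C : Finset (Finset α)) : Prop :=
  ∀ Ω : Finset (Finset α), FaceMinimalCycle d Ω → Ω ⊆ C → ¬ DComplete d Ω →
    ∃ (k : ℕ) (Ωs : Fin k → Finset (Finset α)), 2 ≤ k ∧
      (∀ i, IsCycle d (Ωs i) ∧ Ωs i ⊆ C) ∧
      (∀ F ∈ Ω, ∃ i, F ∈ Ωs i) ∧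
      (∀ F ∈ Ω, Odd ((Finset.univ.filter fun i => F ∈ Ωs i).card)) ∧
      (∀ F : Finset α, (∃ i, F ∈ Ωs i) → F ∉ Ω →
        Even ((Finset.univ.filter fun i => F ∈ Ωs i).card)) ∧
      ∀ i, vertexSet (Ωs i) ⊂ vertexSet Ω

/-- The circuits of `D` admit an admissible order. -/
def HasAdmissibleOrder (D : Finset (Finset α)) : Prop :=
  ∃ (t : ℕ) (F : Fin t → Finset α), Function.Injective F ∧
    (∀ G, G ∈ D ↔ ∃ i, F i = G) ∧
    ∀ i j : Fin t, j < i →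
      ∃ l ∈ F j \ F i, ∃ k : Fin t, k < i ∧ F k \ F i = {l}

/-- Contraction `D/v` of a (not necessarily uniform) clutter: the minimal sets of
`{ e \ {v} | e ∈ D }`. -/
def contractAux (D : Finset (Finset α)) (v : α) : Finset (Finset α) :=
  D.image fun e => e.erase v

def contract (D : Finset (Finset α)) (v : α) : Finset (Finset α) :=
  (contractAux D v).filter fun e => ∀ f ∈ contractAux D v, f ⊆ e → f = e

/-- `D` has a simplicial vertex (trivially true if `D` has no vertices). -/
def HasSimpVertex (D : Finset (Finset α)) : Prop :=
  vertexSet D = ∅ ∨ ∃ v ∈ vertexSet D, ∀ e₁ ∈ D, ∀ e₂ ∈ D, v ∈ e₁ → v ∈ e₂ →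
    ∃ e₃ ∈ D, e₃ ⊆ (e₁ ∪ e₂).erase v

/-- `D` is W-chordal: every clutter obtained from `D` by a sequence of vertex deletions
and contractions has a simplicial vertex. -/
def WChordal (D : Finset (Finset α)) : Prop :=
  ∀ D' : Finset (Finset α),
    Relation.ReflTransGen (fun X Y => ∃ v, Y = delVert X v ∨ Y = contract X v) D D' →
    HasSimpVertex D'

open Finset

section Simplices

variable {d : ℕ}

lemma mem_vertexSet {v : α} {Ω : Finset (Finset α)} : v ∈ vertexSet Ω ↔ ∃ F ∈ Ω, v ∈ F := by
  simp [vertexSet]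

lemma subset_vertexSet {F : Finset α} {Ω : Finset (Finset α)} (h : F ∈ Ω) : F ⊆ vertexSet Ω :=
  fun _ hv => mem_vertexSet.2 ⟨F, h, hv⟩

lemma vertexSet_mono {Ω Θ : Finset (Finset α)} (h : Ω ⊆ Θ) : vertexSet Ω ⊆ vertexSet Θ :=
  biUnion_subset_biUnion_of_subset_left _ h

lemma vertexSet_powersetCard_succ {W : Finset α} {c : ℕ} (h : c < W.card) :
    vertexSet (W.powersetCard (c + 1)) = W := by
  refine Subset.antisymm (fun v hv => ?_) (fun v hv => ?_)
  · obtain ⟨F, hF, hvF⟩ := mem_vertexSet.1 hv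
    exact (mem_powersetCard.1 hF).1 hvF
  · obtain ⟨F, hvF, hFW, hF⟩ :=
      exists_subsuperset_card_eq (singleton_subset_iff.2 hv) (by simp) h
    exact mem_vertexSet.2 ⟨F, mem_powersetCard.2 ⟨hFW, hF⟩, singleton_subset_iff.1 hvF⟩

lemma card_inter_lt_of_ne {A B : Finset α} (hAB : A.card = B.card) (h : A ≠ B) :
    (A ∩ B).card < A.card :=
  card_lt_card <| Finset.ssubset_iff_subset_ne.2
    ⟨inter_subset_left, fun hA => h <| eq_of_subset_of_card_le (inter_eq_left.1 hA) hAB.ge⟩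

lemma card_inter_of_mem_powersetCard {W F G : Finset α} (hW : W.card = d + 2)
    (hF : F ∈ W.powersetCard (d + 1)) (hG : G ∈ W.powersetCard (d + 1)) (hFG : F ≠ G) :
    (F ∩ G).card = d := by
  rw [mem_powersetCard] at hF hG
  have hlt := card_inter_lt_of_ne (hF.2.trans hG.2.symm) hFG
  have hunion := card_le_card (union_subset hF.1 hG.1)
  have := card_inter_add_card_union F G
  omega

lemma card_filter_superset_powersetCard {W e : Finset α} (he : e ⊆ W) :
    ((W.powersetCard (e.card + 1)).filter (e ⊆ ·)).card = W.card - e.card := by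
  have hfaces : (W.powersetCard (e.card + 1)).filter (e ⊆ ·) = (W \ e).image (insert · e) := by
    ext F
    simp only [mem_filter, mem_powersetCard, mem_image, mem_sdiff]
    constructor
    · rintro ⟨⟨hFW, hF⟩, heF⟩
      obtain ⟨a, ha, rfl⟩ := exists_eq_insert_iff.2 ⟨heF, hF.symm⟩
      exact ⟨a, ⟨hFW (mem_insert_self a e), ha⟩, rfl⟩
    · rintro ⟨a, ⟨haW, ha⟩, rfl⟩
      exact ⟨⟨insert_subset haW he, card_insert_of_notMem ha⟩, subset_insert a e⟩
  rw [hfaces, card_image_of_injOn fun a ha b _ hab => (insert_inj (mem_sdiff.1 ha).2).1 hab,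
    card_sdiff_of_subset he]

lemma isCycle_powersetCard {W : Finset α} (hW : W.card = d + 2) :
    IsCycle d (W.powersetCard (d + 1)) := by
  refine ⟨powersetCard_nonempty.2 (by omega), fun F hF => (mem_powersetCard.1 hF).2,
    fun F hF G hG => ?_, fun e he => ?_⟩
  · rcases eq_or_ne F G with rfl | hFG
    · exact .refl
    · exact .single ⟨hF, hG, card_inter_of_mem_powersetCard hW hF hG hFG⟩
  · by_cases heW : e ⊆ W
    · rw [← he, card_filter_superset_powersetCard heW, hW, he, show d + 2 - d = 2 by omega]
      exact even_two
    · rw [filter_false_of_mem fun F hF heF => heW (heF.trans (mem_powersetCard.1 hF).1)]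
      exact Even.zero

end Simplices

section Cycles

variable {d : ℕ} {Ω Θ : Finset (Finset α)}

def EvenChain (d : ℕ) (Θ : Finset (Finset α)) : Prop :=
  (∀ F ∈ Θ, F.card = d + 1) ∧ ∀ e : Finset α, e.card = d → Even ((Θ.filter (e ⊆ ·)).card)

lemma IsCycle.evenChain (h : IsCycle d Ω) : EvenChain d Ω :=
  ⟨h.2.1, h.2.2.2⟩

lemma EvenChain.sdiff (hΘ : EvenChain d Θ) (hΩ : EvenChain d Ω) (h : Ω ⊆ Θ) :
    EvenChain d (Θ \ Ω) := by
  refine ⟨fun F hF => hΘ.1 F (mem_sdiff.1 hF).1, fun e he => ?_⟩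
  have hsub := filter_subset_filter (e ⊆ ·) h
  have hfilter : (Θ \ Ω).filter (e ⊆ ·) = Θ.filter (e ⊆ ·) \ Ω.filter (e ⊆ ·) := by
    ext F
    simp only [mem_filter, mem_sdiff]
    tauto
  rw [hfilter, card_sdiff_of_subset hsub, Nat.even_sub (card_le_card hsub)]
  exact iff_of_true (hΘ.2 e he) (hΩ.2 e he)

lemma EvenChain.eq_powersetCard {W : Finset α} (hΩ : EvenChain d Ω) (hne : Ω.Nonempty)
    (hW : W.card = d + 2) (hsub : Ω ⊆ W.powersetCard (d + 1)) : Ω = W.powersetCard (d + 1) := by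
  obtain ⟨F, hF⟩ := hne
  refine Subset.antisymm hsub fun G hG => ?_
  rcases eq_or_ne F G with rfl | hFG
  · exact hF
  have heF : F ∩ G ⊆ F := inter_subset_left
  have heG : F ∩ G ⊆ G := inter_subset_right
  have he : (F ∩ G).card = d := card_inter_of_mem_powersetCard hW (hsub hF) hG hFG
  generalize F ∩ G = e at heF heG he
  -- `e` lies in exactly two faces of the simplex (`F` and `G`) and in evenly many faces of `Ω`
  have htwo : ((W.powersetCard (d + 1)).filter (e ⊆ ·)).card = 2 := by
    rw [← he, card_filter_superset_powersetCard (heF.trans (mem_powersetCard.1 (hsub hF)).1), hW]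
    omega
  have hsub' := filter_subset_filter (e ⊆ ·) hsub
  have hpos : 0 < (Ω.filter (e ⊆ ·)).card := card_pos.2 ⟨F, mem_filter.2 ⟨hF, heF⟩⟩
  obtain ⟨m, hm⟩ := hΩ.2 e he
  have heq := eq_of_subset_of_card_le hsub' (by have := card_le_card hsub'; omega)
  exact (mem_filter.1 (heq ▸ mem_filter.2 ⟨hG, heG⟩)).1

lemma IsCycle.dComplete_of_card_vertexSet (hΩ : IsCycle d Ω)
    (hV : (vertexSet Ω).card = d + 2) : DComplete d Ω := by
  have hsub : Ω ⊆ (vertexSet Ω).powersetCard (d + 1) := fun F hF =>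
    mem_powersetCard.2 ⟨subset_vertexSet hF, hΩ.2.1 F hF⟩
  intro F hF hFc
  rw [hΩ.evenChain.eq_powersetCard hΩ.1 hV hsub]
  exact mem_powersetCard.2 ⟨hF, hFc⟩

lemma IsCycle.add_two_le_card_vertexSet (hΩ : IsCycle d Ω) : d + 2 ≤ (vertexSet Ω).card := by
  obtain ⟨⟨F, hF⟩, hcard, -, heven⟩ := hΩ
  obtain ⟨e, heF, he⟩ := exists_subset_card_eq (show d ≤ F.card by rw [hcard F hF]; omega)
  have hFe : F ∈ Ω.filter (e ⊆ ·) := mem_filter.2 ⟨hF, heF⟩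
  obtain ⟨G, hG, hGF⟩ := exists_mem_ne (s := Ω.filter (e ⊆ ·))
    (by obtain ⟨m, hm⟩ := heven e he; have := card_pos.2 ⟨F, hFe⟩; omega) F
  have hGΩ := (mem_filter.1 hG).1
  have hlt := card_inter_lt_of_ne ((hcard G hGΩ).trans (hcard F hF).symm) hGF
  have hunion := card_le_card (union_subset (subset_vertexSet hGΩ) (subset_vertexSet hF))
  have := card_inter_add_card_union G F
  have := hcard F hF
  have := hcard G hGΩ
  omega

lemma FaceMinimalCycle.exists_eq_powersetCard (hΩ : FaceMinimalCycle d Ω) (hc : DComplete d Ω) :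
    ∃ W ⊆ vertexSet Ω, W.card = d + 2 ∧ Ω = W.powersetCard (d + 1) := by
  obtain ⟨W, hWV, hW⟩ := exists_subset_card_eq hΩ.1.add_two_le_card_vertexSet
  refine ⟨W, hWV, hW, (hΩ.2 _ (isCycle_powersetCard hW) fun F hF => ?_).symm⟩
  rw [mem_powersetCard] at hF
  exact hc F (hF.1.trans hWV) hF.2

lemma IsCycle.exists_faceMinimalCycle_subset (hΩ : IsCycle d Ω) :
    ∃ Ω₀ ⊆ Ω, FaceMinimalCycle d Ω₀ := by
  classical
  obtain ⟨Ω₀, hΩ₀Ω, hmin⟩ :=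
    (Ω.powerset.filter (IsCycle d)).exists_le_minimal (mem_filter.2 ⟨mem_powerset_self Ω, hΩ⟩)
  refine ⟨Ω₀, hΩ₀Ω, (mem_filter.1 hmin.prop).2, fun Ω' hΩ' hsub => ?_⟩
  exact le_antisymm hsub (hmin.2 (mem_filter.2 ⟨mem_powerset.2 (hsub.trans hΩ₀Ω), hΩ'⟩) hsub)

/-- The path-connected component of any face of a nonempty even chain is a cycle. -/
lemma EvenChain.exists_isCycle_subset (hΘ : EvenChain d Θ) (hne : Θ.Nonempty) :
    ∃ Ω ⊆ Θ, IsCycle d Ω := by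
  classical
  obtain ⟨F, hF⟩ := hne
  let adj (Φ : Finset (Finset α)) (A B : Finset α) : Prop := A ∈ Φ ∧ B ∈ Φ ∧ (A ∩ B).card = d
  let Ω := Θ.filter (Relation.ReflTransGen (adj Θ) F)
  have hΩΘ : Ω ⊆ Θ := filter_subset _ _
  have hFΩ : F ∈ Ω := mem_filter.2 ⟨hF, .refl⟩
  have hreach : ∀ G ∈ Ω, Relation.ReflTransGen (adj Ω) F G := by
    suffices ∀ G, Relation.ReflTransGen (adj Θ) F G → Relation.ReflTransGen (adj Ω) F G from
      fun G hG => this G (mem_filter.1 hG).2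
    intro G hG
    induction hG with
    | refl => exact .refl
    | tail hFA hAB ih =>
      exact ih.tail ⟨mem_filter.2 ⟨hAB.1, hFA⟩, mem_filter.2 ⟨hAB.2.1, hFA.tail hAB⟩, hAB.2.2⟩
  have : Std.Symm (adj Ω) := ⟨fun A B h => ⟨h.2.1, h.1, by rw [inter_comm]; exact h.2.2⟩⟩
  refine ⟨Ω, hΩΘ, ⟨F, hFΩ⟩, fun G hG => hΘ.1 G (hΩΘ hG),
    fun G hG H hH => (Std.Symm.symm _ _ (hreach G hG)).trans (hreach H hH), fun e he => ?_⟩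
  by_cases hmeets : ∃ G ∈ Ω, e ⊆ G
  · -- two faces of `Θ` sharing the `(d-1)`-face `e` are equal or adjacent
    obtain ⟨G, hGΩ, heG⟩ := hmeets
    have hall : Ω.filter (e ⊆ ·) = Θ.filter (e ⊆ ·) := by
      refine Subset.antisymm (filter_subset_filter _ hΩΘ) fun H hH => ?_
      obtain ⟨hHΘ, heH⟩ := mem_filter.1 hH
      refine mem_filter.2 ⟨?_, heH⟩
      rcases eq_or_ne G H with rfl | hGH
      · exact hGΩ
      have hGΘ := hΩΘ hGΩ
      have hlt := card_inter_lt_of_ne ((hΘ.1 G hGΘ).trans (hΘ.1 H hHΘ).symm) hGH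
      have hle := card_le_card (subset_inter heG heH)
      rw [hΘ.1 G hGΘ] at hlt
      exact mem_filter.2 ⟨hHΘ, (mem_filter.1 hGΩ).2.tail ⟨hGΘ, hHΘ, by omega⟩⟩
    rw [hall]
    exact hΘ.2 e he
  · push Not at hmeets
    rw [filter_false_of_mem hmeets]
    exact Even.zero

end Cycles

section Chains

variable {d : ℕ} {C Ω Θ : Finset (Finset α)}

def toChain (Θ : Finset (Finset α)) : Finset α → ZMod 2 :=
  fun F => if F ∈ Θ then 1 else 0

@[simp]
lemma toChain_empty : toChain (∅ : Finset (Finset α)) = 0 := by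
  funext F
  simp [toChain]

lemma toChain_sdiff_add (h : Ω ⊆ Θ) : toChain (Θ \ Ω) + toChain Ω = toChain Θ := by
  funext F
  by_cases hF : F ∈ Ω
  · simp [toChain, hF, h hF]
  · simp [toChain, hF]

lemma toChain_eq_sum_iff {k : ℕ} (Ωs : Fin k → Finset (Finset α)) :
    toChain Ω = ∑ i, toChain (Ωs i) ↔
      ∀ F, F ∈ Ω ↔ Odd ((univ.filter fun i => F ∈ Ωs i).card) := by
  simp only [funext_iff, Finset.sum_apply, toChain, sum_boole]
  refine forall_congr' fun F => ?_
  by_cases hF : F ∈ Ω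
  · rw [if_pos hF, eq_comm, ZMod.natCast_eq_one_iff_odd, iff_true_intro hF, true_iff]
  · rw [if_neg hF, eq_comm, ZMod.natCast_eq_zero_iff_even, iff_false_intro hF, false_iff,
      Nat.not_odd_iff_even]

lemma exists_of_odd_card_filter {ι : Type*} [Fintype ι] {p : ι → Prop} [DecidablePred p]
    (h : Odd (univ.filter p).card) : ∃ i, p i := by
  obtain ⟨i, hi⟩ := card_pos.1 h.pos
  exact ⟨i, (mem_filter.1 hi).2⟩

lemma EvenChain.toChain_mem {p : Submodule (ZMod 2) (Finset α → ZMod 2)} (hΘ : EvenChain d Θ)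
    (h : ∀ Ω ⊆ Θ, FaceMinimalCycle d Ω → toChain Ω ∈ p) : toChain Θ ∈ p := by
  induction Θ using Finset.strongInduction with
  | H Θ ih =>
  rcases Θ.eq_empty_or_nonempty with rfl | hne
  · simp
  obtain ⟨Ω₁, hΩ₁Θ, hΩ₁⟩ := hΘ.exists_isCycle_subset hne
  obtain ⟨Ω, hΩΩ₁, hΩ⟩ := hΩ₁.exists_faceMinimalCycle_subset
  have hΩΘ := hΩΩ₁.trans hΩ₁Θ
  rw [← toChain_sdiff_add hΩΘ]
  refine p.add_mem (ih _ (sdiff_ssubset hΩΘ hΩ.1.1) (hΘ.sdiff hΩ.1.evenChain hΩΘ)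
    fun Ω' hΩ' => h Ω' (hΩ'.trans sdiff_subset)) (h Ω hΩΘ hΩ)

variable (d C) in
def boundarySpan (S : Finset α) : Submodule (ZMod 2) (Finset α → ZMod 2) :=
  Submodule.span (ZMod 2) ((fun W => toChain (W.powersetCard (d + 1))) ''
    {W | W ⊆ S ∧ W.card = d + 2 ∧ W.powersetCard (d + 1) ⊆ C})

lemma boundarySpan_mono {S T : Finset α} (h : S ⊆ T) : boundarySpan d C S ≤ boundarySpan d C T :=
  Submodule.span_mono (Set.image_mono fun _ hW => ⟨hW.1.trans h, hW.2⟩)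

lemma exists_eq_sum_of_mem_boundarySpan {S : Finset α} {x : Finset α → ZMod 2}
    (hx : x ∈ boundarySpan d C S) :
    ∃ (k : ℕ) (W : Fin k → Finset α),
      (∀ i, W i ⊆ S ∧ (W i).card = d + 2 ∧ (W i).powersetCard (d + 1) ⊆ C) ∧
        x = ∑ i, toChain ((W i).powersetCard (d + 1)) := by
  induction hx using Submodule.span_induction with
  | mem x hx =>
    obtain ⟨W, hW, rfl⟩ := hx
    exact ⟨1, fun _ => W, fun _ => hW, by simp⟩
  | zero => exact ⟨0, Fin.elim0, Fin.rec0, by simp⟩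
  | add x y _ _ hx hy =>
    obtain ⟨k, W, hW, rfl⟩ := hx
    obtain ⟨l, W', hW', rfl⟩ := hy
    exact ⟨k + l, Fin.append W W', Fin.addCases (by simpa using hW) (by simpa using hW'),
      by simp [Fin.sum_univ_add]⟩
  | smul c x _ hx =>
    obtain ⟨k, W, hW, rfl⟩ := hx
    obtain rfl | rfl : c = 0 ∨ c = 1 := by revert c; decide
    · exact ⟨0, Fin.elim0, Fin.rec0, by simp⟩
    · exact ⟨k, W, hW, by simp⟩

end Chains

section Chorded

variable {d : ℕ} {C Ω : Finset (Finset α)}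

lemma Chorded.toChain_mem_boundarySpan (hch : Chorded d C) (hΩ : IsCycle d Ω) (hΩC : Ω ⊆ C) :
    toChain Ω ∈ boundarySpan d C (vertexSet Ω) := by
  obtain ⟨n, hn⟩ : ∃ n, (vertexSet Ω).card = n := ⟨_, rfl⟩
  induction n using Nat.strong_induction_on generalizing Ω with
  | _ n ih =>
  refine hΩ.evenChain.toChain_mem fun Ω₀ hΩ₀Ω hΩ₀ =>
    boundarySpan_mono (vertexSet_mono hΩ₀Ω) ?_
  have hΩ₀C := hΩ₀Ω.trans hΩC
  by_cases hc : DComplete d Ω₀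
  · obtain ⟨W, hWV, hW, rfl⟩ := hΩ₀.exists_eq_powersetCard hc
    exact Submodule.subset_span ⟨W, ⟨hWV, hW, hΩ₀C⟩, rfl⟩
  obtain ⟨k, Ωs, -, hΩs, -, hodd, heven, hV⟩ := hch Ω₀ hΩ₀ hΩ₀C hc
  have hsum : toChain Ω₀ = ∑ i, toChain (Ωs i) := (toChain_eq_sum_iff Ωs).2 fun F =>
    ⟨hodd F, fun h => by_contra fun hF =>
      Nat.not_even_iff_odd.2 h (heven F (exists_of_odd_card_filter h) hF)⟩
  rw [hsum]
  refine Submodule.sum_mem _ fun i _ => boundarySpan_mono (hV i).subset ?_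
  have hlt := card_lt_card ((hV i).trans_le (vertexSet_mono hΩ₀Ω))
  exact ih _ (hn ▸ hlt) (hΩs i).1 (hΩs i).2 rfl

lemma two_le_of_ssubset_vertexSet {k : ℕ} {W : Fin k → Finset α} (hne : Ω.Nonempty)
    (hcover : ∀ F ∈ Ω, ∃ i, F ⊆ W i) (hW : ∀ i, W i ⊂ vertexSet Ω) : 2 ≤ k := by
  by_contra hk
  have : Subsingleton (Fin k) := Fin.subsingleton_iff_le_one.2 (by omega)
  obtain ⟨F, hF⟩ := hne
  obtain ⟨i, -⟩ := hcover F hF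
  refine not_subset_of_ssubset (hW i) fun v hv => ?_
  obtain ⟨G, hG, hvG⟩ := mem_vertexSet.1 hv
  obtain ⟨j, hj⟩ := hcover G hG
  exact Subsingleton.elim j i ▸ hj hvG

end Chorded

theorem chorded_iff_cycles_symmDiff_general (d : ℕ) (C : Finset (Finset α)) :
    Chorded d C ↔
      ∀ Ω : Finset (Finset α), IsCycle d Ω → Ω ⊆ C →
        ∃ (k : ℕ) (W : Fin k → Finset α),
          (∀ i, W i ⊆ vertexSet Ω ∧ (W i).card = d + 2 ∧
            (W i).powersetCard (d + 1) ⊆ C) ∧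
          ∀ F : Finset α,
            F ∈ Ω ↔
              Odd ((Finset.univ.filter fun i => F ∈ (W i).powersetCard (d + 1)).card) := by
  constructor
  · intro hch Ω hΩ hΩC
    obtain ⟨k, W, hW, hsum⟩ :=
      exists_eq_sum_of_mem_boundarySpan (hch.toChain_mem_boundarySpan hΩ hΩC)
    exact ⟨k, W, hW, (toChain_eq_sum_iff _).1 hsum⟩
  · intro h Ω hΩ hΩC hc
    obtain ⟨k, W, hW, hpar⟩ := h Ω hΩ.1 hΩC
    have hcover (F) (hF : F ∈ Ω) : ∃ i, F ∈ (W i).powersetCard (d + 1) :=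
      exists_of_odd_card_filter ((hpar F).1 hF)
    have hssub (i) : W i ⊂ vertexSet Ω := (hW i).1.ssubset_of_ne fun hV =>
      hc (hΩ.1.dComplete_of_card_vertexSet (hV ▸ (hW i).2.1))
    refine ⟨k, fun i => (W i).powersetCard (d + 1), ?_, fun i => ⟨isCycle_powersetCard (hW i).2.1,
      (hW i).2.2⟩, hcover, fun F hF => (hpar F).1 hF,
      fun F _ hF => Nat.not_odd_iff_even.1 (mt (hpar F).2 hF), fun i => ?_⟩
    · refine two_le_of_ssubset_vertexSet hΩ.1.1 (fun F hF => ?_) hssub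
      obtain ⟨i, hi⟩ := hcover F hF
      exact ⟨i, (mem_powersetCard.1 hi).1⟩
    · rw [vertexSet_powersetCard_succ (by rw [(hW i).2.1]; omega)]
      exact hssub i

/-- For a nonempty `d`-clutter `C`, the complex `⟨C⟩` is `d`-chorded iff for
every `d`-cycle `Ω` with all `d`-faces in `C`, `Facets(Ω)` is the symmetric difference of a
family of complete subclutters of `C`, each consisting of all `(d+1)`-subsets of some
`(d+2)`-element subset of `V(Ω)`. -/
theorem chorded_iff_cycles_symmDiff (V : Finset α) (d : ℕ) (C : Finset (Finset α))
    (hC : IsClutter V (d + 1) C) (hne : C.Nonempty) :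
    Chorded d C ↔
      ∀ Ω : Finset (Finset α), IsCycle d Ω → Ω ⊆ C →
        ∃ (k : ℕ) (W : Fin k → Finset α),
          (∀ i, W i ⊆ vertexSet Ω ∧ (W i).card = d + 2 ∧
            (W i).powersetCard (d + 1) ⊆ C) ∧
          ∀ F : Finset α,
            F ∈ Ω ↔
              Odd ((Finset.univ.filter fun i => F ∈ (W i).powersetCard (d + 1)).card) :=
  chorded_iff_cycles_symmDiff_general d C

end ClutterPaper
end

section
/- Let C be a chordal graph, regarded as a 1-dimensional uniform clutter, and let F be a simplicial edge of C, that is, F ∈ SMS(C^+) where C^+ is the 2-clutter of 3-element cliques (triangles) of C. Then the graph C − F = C \ {F} is chordal. -/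
namespace ClutterPaper

variable {α : Type*} [DecidableEq α]

/-!
Write `F = {a, b}`. As `F` is simplicial in `C⁺`, the set `A = N_{C⁺}[F]` of `a`, `b` and all
their common neighbours is a clique of `C`. More generally, let `A` be a clique of a chordal graph
`H` containing `a`, `b` and all their common neighbours, and glue a clique on a set `U` of fresh
vertices onto `A`; then deleting the edge `ab` leaves a chordal graph (`U = ∅` is the theorem).

The proof runs along a simplicial elimination of `H`. If the eliminated vertex `x` is `a`, its
neighbours after deleting `ab` form the clique `(U ∪ A) − b`, and removing `a` leaves the clique
on `U ∪ (A − a)` glued onto the chordal graph `H − a`. If `x ∈ A − {a, b}`, all neighbours of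
`x` lie in `A`, so `x` can be moved from `A` to `U`. Otherwise `x` is not adjacent to both `a`
and `b` and stays simplicial after deleting `ab`.
-/

section Graph

open Finset

variable {V : Finset α} {C H : Finset (Finset α)}

theorem mem_delMS_singleton {v : α} {e : Finset α} :
    e ∈ delMS C {v} ↔ e ∈ C ∧ v ∉ e := by
  simp [delMS]

theorem delMS_erase (F e : Finset α) : delMS (C.erase F) e = (delMS C e).erase F :=
  filter_erase _ _ _

theorem delMS_union (D : Finset (Finset α)) (e : Finset α) :
    delMS (C ∪ D) e = delMS C e ∪ delMS D e :=
  filter_union _ _ _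

theorem delMS_powersetCard_singleton (S : Finset α) (k : ℕ) (v : α) :
    delMS (S.powersetCard k) {v} = (S.erase v).powersetCard k := by
  ext e
  simp only [mem_delMS_singleton, mem_powersetCard, subset_erase]
  tauto

theorem delMS_singleton_eq_self {v : α} (hv : ∀ e ∈ C, v ∉ e) : delMS C {v} = C := by
  ext e
  simp only [mem_delMS_singleton, and_iff_left_iff_imp]
  exact hv e

theorem mem_closedNbhd_singleton {v x : α} :
    x ∈ closedNbhd V C {v} ↔ x = v ∨ x ∈ V ∧ {x, v} ∈ C := by
  simp [closedNbhd]

theorem subset_closedNbhd_of_card_eq_succ {F T : Finset α} (hT : T ∈ C) (hTV : T ⊆ V)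
    (hFT : F ⊆ T) (hcard : T.card = F.card + 1) : T ⊆ closedNbhd V C F := by
  intro y hy
  by_cases hyF : y ∈ F
  · exact mem_union_left _ hyF
  have hyT : insert y F = T := eq_of_subset_of_card_le (insert_subset hy hFT)
    (by rw [hcard, card_insert_of_notMem hyF])
  exact mem_union_right _ (mem_filter.2 ⟨hTV hy, hyT ▸ hT⟩)

theorem IsClique.pair_mem {A : Finset α} (hA : IsClique V 2 C A) {x y : α} (hx : x ∈ A)
    (hy : y ∈ A) (hxy : x ≠ y) : {x, y} ∈ C :=
  hA.2 _ (insert_subset hx (singleton_subset_iff.2 hy)) (card_pair hxy)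

omit [DecidableEq α] in
theorem IsClique.subset {c : ℕ} {A B : Finset α} (hA : IsClique V c C A) (hB : B ⊆ A) :
    IsClique V c C B :=
  ⟨hB.trans hA.1, fun F hF => hA.2 F (hF.trans hB)⟩

omit [DecidableEq α] in
theorem IsClique.powersetCard_subset {c : ℕ} {A : Finset α} (hA : IsClique V c C A) :
    A.powersetCard c ⊆ C := fun F hF =>
  hA.2 F (mem_powersetCard.1 hF).1 (mem_powersetCard.1 hF).2

theorem isClique_union_powersetCard {c : ℕ} {A : Finset α} (hA : A ⊆ V) :
    IsClique V c (C ∪ A.powersetCard c) A :=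
  ⟨hA, fun _ hF hc => mem_union_right _ (mem_powersetCard.2 ⟨hF, hc⟩)⟩

theorem IsClique.delMS_singleton_erase {A : Finset α} (hA : IsClique V 2 C A) (v : α) :
    IsClique V 2 (delMS C {v}) (A.erase v) :=
  ⟨(erase_subset v A).trans hA.1, fun P hP hP2 =>
    mem_delMS_singleton.2 ⟨hA.2 P (hP.trans (erase_subset v A)) hP2,
      fun hv => notMem_erase v A (hP hv)⟩⟩

theorem IsClique.mem_closedNbhd {A : Finset α} (hA : IsClique V 2 C A) {x y : α}
    (hx : x ∈ A) (hy : y ∈ A) : y ∈ closedNbhd V C {x} := by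
  rcases eq_or_ne y x with rfl | hyx
  · exact mem_closedNbhd_singleton.2 (Or.inl rfl)
  · exact mem_closedNbhd_singleton.2 (Or.inr ⟨hA.1 hy, hA.pair_mem hy hx hyx⟩)

theorem IsClique.of_ascent {K : Finset α} {c : ℕ}
    (hK : IsClique V (c + 1) (ascent V c C) K) (hcard : c + 1 ≤ K.card) : IsClique V c C K := by
  refine ⟨hK.1, fun P hPK hP => ?_⟩
  obtain ⟨T, hPT, hTK, hT⟩ := exists_subsuperset_card_eq hPK (by omega) hcard
  exact (mem_filter.1 (hK.2 T hTK hT)).2 (mem_powersetCard.2 ⟨hPT, hP⟩)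

theorem insert_mem_ascent_two (hC : IsClutter V 2 C) {w a b : α} (hwa : {w, a} ∈ C)
    (hwb : {w, b} ∈ C) (hab : {a, b} ∈ C) :
    {w, a, b} ∈ ascent V 2 C := by
  have hne : ∀ {x y : α}, {x, y} ∈ C → x ≠ y := fun hxy h => by
    subst h
    simpa using (hC _ hxy).2
  refine mem_filter.2 ⟨mem_powersetCard.2 ⟨?_, ?_⟩, fun P hP => ?_⟩
  · exact insert_subset ((hC _ hwa).1 (mem_insert_self w _)) (hC _ hab).1
  · rw [card_insert_of_notMem (by simp [hne hwa, hne hwb]), card_pair (hne hab)]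
  obtain ⟨hPsub, hP2⟩ := mem_powersetCard.1 hP
  obtain ⟨x, y, hxy, rfl⟩ := card_eq_two.1 hP2
  have hx : x = w ∨ x = a ∨ x = b := by simpa using hPsub (mem_insert_self x {y})
  have hy : y = w ∨ y = a ∨ y = b := by simpa using hPsub (by simp : y ∈ ({x, y} : Finset α))
  rcases hx with rfl | rfl | rfl <;> rcases hy with rfl | rfl | rfl <;>
    simp_all [pair_comm]

/-- Unlike `Chordal.step`, this allows `v` to lie in no circuit of `C`. -/
theorem Chordal.of_delMS_singleton {v : α} (hv : IsClique V 2 C (closedNbhd V C {v}))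
    (h : Chordal V 2 (delMS C {v})) : Chordal V 2 C := by
  by_cases hedge : ∃ e ∈ C, v ∈ e
  · obtain ⟨e, he, hve⟩ := hedge
    exact Chordal.step {v} ⟨⟨by simp, e, he, singleton_subset_iff.2 hve⟩, hv⟩ h
  · push Not at hedge
    rwa [delMS_singleton_eq_self hedge] at h

theorem Chordal.union_powersetCard {A U : Finset α} (h : Chordal V 2 H) (hA : IsClique V 2 H A)
    (hUV : U ⊆ V) (hUA : Disjoint U A) (hU : ∀ e ∈ H, Disjoint U e) :
    Chordal V 2 (H ∪ (U ∪ A).powersetCard 2) := by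
  induction U using Finset.induction_on with
  | empty => rwa [empty_union, union_eq_left.2 hA.powersetCard_subset]
  | @insert u U huU ih =>
    have huA : u ∉ A := (disjoint_insert_left.1 hUA).1
    have hfresh : ∀ e ∈ H, u ∉ e := fun e he => (disjoint_insert_left.1 (hU e he)).1
    rw [insert_union]
    refine Chordal.of_delMS_singleton (v := u) ((isClique_union_powersetCard ?_).subset ?_) ?_
    · rw [← insert_union]
      exact union_subset hUV hA.1
    · intro x hx
      rcases mem_closedNbhd_singleton.1 hx with rfl | ⟨-, hxu⟩
      · exact mem_insert_self _ _
      · rcases mem_union.1 hxu with hxu | hxu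
        · exact absurd (by simp) (hfresh _ hxu)
        · exact (mem_powersetCard.1 hxu).1 (by simp)
    · rw [delMS_union, delMS_singleton_eq_self hfresh, delMS_powersetCard_singleton,
        erase_insert (by simp [huU, huA])]
      exact ih (fun x hx => hUV (mem_insert_of_mem hx)) (disjoint_insert_left.1 hUA).2
        fun e he => (disjoint_insert_left.1 (hU e he)).2

theorem chordal_union_powersetCard_erase_of_simplicial {A U : Finset α} {a b : α}
    (hsimp : IsClique V 2 H (closedNbhd V H {a})) (hnext : Chordal V 2 (delMS H {a}))
    (hne : a ≠ b) (ha : a ∈ A) (hb : b ∈ A) (hA : IsClique V 2 H A) (hUV : U ⊆ V)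
    (hUA : Disjoint U A) (hU : ∀ e ∈ H, Disjoint U e)
    (hcommon : ∀ w, {w, a} ∈ H → {w, b} ∈ H → w ∈ A) :
    Chordal V 2 ((H ∪ (U ∪ A).powersetCard 2).erase {a, b}) := by
  set G := (H ∪ (U ∪ A).powersetCard 2).erase {a, b}
  have hbN : b ∈ closedNbhd V H {a} := mem_closedNbhd_singleton.2
    (Or.inr ⟨hA.1 hb, pair_comm a b ▸ hA.pair_mem ha hb hne⟩)
  -- every neighbour of `a` in `H` is adjacent to `b` as well, hence lies in `A`
  have hN : closedNbhd V G {a} ⊆ (U ∪ A).erase b := by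
    intro x hx
    rcases mem_closedNbhd_singleton.1 hx with rfl | ⟨hxV, hxa⟩
    · exact mem_erase.2 ⟨hne, mem_union_right _ ha⟩
    obtain ⟨hxab, hxa⟩ := mem_erase.1 hxa
    have hxb : x ≠ b := by
      rintro rfl
      exact hxab (pair_comm _ _)
    refine mem_erase.2 ⟨hxb, ?_⟩
    rcases mem_union.1 hxa with hxa | hxa
    · exact mem_union_right _ <| hcommon x hxa <|
        hsimp.pair_mem (mem_closedNbhd_singleton.2 (Or.inr ⟨hxV, hxa⟩)) hbN hxb
    · exact (mem_powersetCard.1 hxa).1 (by simp)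
  have hclique : IsClique V 2 G ((U ∪ A).erase b) :=
    ⟨(erase_subset _ _).trans (union_subset hUV hA.1), fun P hP hP2 =>
      mem_erase.2 ⟨by rintro rfl; simpa using hP (by simp : b ∈ ({a, b} : Finset α)),
        mem_union_right _ (mem_powersetCard.2 ⟨hP.trans (erase_subset _ _), hP2⟩)⟩⟩
  refine Chordal.of_delMS_singleton (hclique.subset hN) ?_
  have hdel : delMS G {a} = delMS H {a} ∪ (U ∪ A.erase a).powersetCard 2 := by
    rw [delMS_erase, erase_eq_of_notMem (by simp [mem_delMS_singleton]), delMS_union,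
      delMS_powersetCard_singleton, erase_union_distrib,
      erase_eq_of_notMem (disjoint_right.1 hUA ha)]
  rw [hdel]
  exact hnext.union_powersetCard (hA.delMS_singleton_erase a) hUV
    (disjoint_of_subset_right (erase_subset a A) hUA)
    fun e he => hU e (mem_delMS_singleton.1 he).1

theorem union_powersetCard_eq_delMS_union (hH : IsClutter V 2 H) {S : Finset α} {x : α}
    (hN : closedNbhd V H {x} ⊆ S) :
    H ∪ S.powersetCard 2 = delMS H {x} ∪ S.powersetCard 2 := by
  refine subset_antisymm ?_ (union_subset_union (filter_subset _ _) le_rfl)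
  intro e he
  rcases mem_union.1 he with he | he
  · by_cases hxe : x ∈ e
    · refine mem_union_right _ (mem_powersetCard.2 ⟨fun y hy => ?_, (hH e he).2⟩)
      by_cases hyx : y = x
      · exact hN (mem_closedNbhd_singleton.2 (Or.inl hyx))
      have hpair : {y, x} = e := eq_of_subset_of_card_le
        (insert_subset hy (singleton_subset_iff.2 hxe))
        (by rw [(hH e he).2, card_pair hyx])
      exact hN (mem_closedNbhd_singleton.2 (Or.inr ⟨(hH e he).1 hy, hpair ▸ he⟩))
    · exact mem_union_left _ (mem_delMS_singleton.2 ⟨he, hxe⟩)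
  · exact mem_union_right _ he

theorem closedNbhd_subset_of_isClique {A : Finset α} {a b x : α}
    (hsimp : IsClique V 2 H (closedNbhd V H {x})) (hA : IsClique V 2 H A) (ha : a ∈ A)
    (hb : b ∈ A) (hxA : x ∈ A) (hcommon : ∀ w, {w, a} ∈ H → {w, b} ∈ H → w ∈ A) :
    closedNbhd V H {x} ⊆ A := by
  intro y hy
  rcases eq_or_ne y a with rfl | hya
  · exact ha
  rcases eq_or_ne y b with rfl | hyb
  · exact hb
  exact hcommon y (hsimp.pair_mem hy (hA.mem_closedNbhd hxA ha) hya)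
    (hsimp.pair_mem hy (hA.mem_closedNbhd hxA hb) hyb)

theorem isClique_closedNbhd_union_powersetCard_erase {S F : Finset α} {x : α}
    (hsimp : IsClique V 2 H (closedNbhd V H {x})) (hxS : x ∉ S)
    (hF : ¬ F ⊆ closedNbhd V H {x}) :
    IsClique V 2 ((H ∪ S.powersetCard 2).erase F)
      (closedNbhd V ((H ∪ S.powersetCard 2).erase F) {x}) := by
  have hsub : closedNbhd V ((H ∪ S.powersetCard 2).erase F) {x} ⊆ closedNbhd V H {x} := by
    intro y hy
    rcases mem_closedNbhd_singleton.1 hy with rfl | ⟨hyV, hyx⟩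
    · exact mem_closedNbhd_singleton.2 (Or.inl rfl)
    rcases mem_union.1 (mem_of_mem_erase hyx) with hyx | hyx
    · exact mem_closedNbhd_singleton.2 (Or.inr ⟨hyV, hyx⟩)
    · exact absurd ((mem_powersetCard.1 hyx).1 (by simp)) hxS
  refine ⟨hsub.trans hsimp.1, fun P hP hP2 => mem_erase.2 ⟨?_,
    mem_union_left _ (hsimp.2 P (hP.trans hsub) hP2)⟩⟩
  rintro rfl
  exact hF (hP.trans hsub)

theorem not_pair_subset_closedNbhd {A : Finset α} {a b x : α} (ha : a ∈ A) (hb : b ∈ A)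
    (hxA : x ∉ A) (hcommon : ∀ w, {w, a} ∈ H → {w, b} ∈ H → w ∈ A) :
    ¬ {a, b} ⊆ closedNbhd V H {x} := fun hab => by
  have hadj : ∀ y ∈ A, y ∈ closedNbhd V H {x} → {x, y} ∈ H := fun y hy hyN =>
    pair_comm y x ▸
      ((mem_closedNbhd_singleton.1 hyN).resolve_left (ne_of_mem_of_not_mem hy hxA)).2
  exact hxA (hcommon x (hadj a ha (hab (by simp))) (hadj b hb (hab (by simp))))

theorem Chordal.union_powersetCard_erase (h : Chordal V 2 H) (hH : IsClutter V 2 H)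
    {A U : Finset α} {a b : α} (hne : a ≠ b) (ha : a ∈ A) (hb : b ∈ A)
    (hA : IsClique V 2 H A) (hUV : U ⊆ V) (hUA : Disjoint U A) (hU : ∀ e ∈ H, Disjoint U e)
    (hcommon : ∀ w, {w, a} ∈ H → {w, b} ∈ H → w ∈ A) :
    Chordal V 2 ((H ∪ (U ∪ A).powersetCard 2).erase {a, b}) := by
  induction h generalizing U A with
  | empty => exact absurd (hA.pair_mem ha hb hne) (notMem_empty _)
  | @step H e hsms hnext ih =>
    obtain ⟨x, rfl⟩ : ∃ x, e = {x} := card_eq_one.1 (by have := hsms.1.1; omega)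
    have hH' : IsClutter V 2 (delMS H {x}) := fun e he => hH e (mem_delMS_singleton.1 he).1
    have hcommon' : ∀ w, {w, a} ∈ delMS H {x} → {w, b} ∈ delMS H {x} → w ∈ A :=
      fun w hwa hwb => hcommon w (mem_delMS_singleton.1 hwa).1 (mem_delMS_singleton.1 hwb).1
    by_cases hxa : x = a
    · subst hxa
      exact chordal_union_powersetCard_erase_of_simplicial hsms.2 hnext hne ha hb hA hUV hUA hU
        hcommon
    by_cases hxb : x = b
    · subst hxb
      rw [pair_comm]
      exact chordal_union_powersetCard_erase_of_simplicial hsms.2 hnext hne.symm hb ha hA hUV hUA hU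
        fun w hwb hwa => hcommon w hwa hwb
    by_cases hxA : x ∈ A
    · -- `x` moves from `A` to the glued clique `U`
      have hS : insert x U ∪ A.erase x = U ∪ A := by
        rw [insert_union, ← union_insert, insert_erase hxA]
      rw [union_powersetCard_eq_delMS_union hH
        ((closedNbhd_subset_of_isClique hsms.2 hA ha hb hxA hcommon).trans
          subset_union_right), ← hS]
      exact ih hH' (mem_erase.2 ⟨Ne.symm hxa, ha⟩) (mem_erase.2 ⟨Ne.symm hxb, hb⟩)
        (hA.delMS_singleton_erase x) (insert_subset (hA.1 hxA) hUV)
        (disjoint_insert_left.2 ⟨notMem_erase x A,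
          disjoint_of_subset_right (erase_subset x A) hUA⟩)
        (fun e he => disjoint_insert_left.2
          ⟨(mem_delMS_singleton.1 he).2, hU e (mem_delMS_singleton.1 he).1⟩)
        fun w hwa hwb => mem_erase.2 ⟨fun hwx => (mem_delMS_singleton.1 hwa).2
          (hwx ▸ mem_insert_self w _), hcommon' w hwa hwb⟩
    · obtain ⟨-, e₀, he₀, hxe₀⟩ := hsms.1
      have hxS : x ∉ U ∪ A := notMem_union.2
        ⟨disjoint_right.1 (hU e₀ he₀) (singleton_subset_iff.1 hxe₀), hxA⟩
      refine Chordal.of_delMS_singleton (isClique_closedNbhd_union_powersetCard_erase hsms.2 hxS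
        (not_pair_subset_closedNbhd ha hb hxA hcommon)) ?_
      rw [delMS_erase, delMS_union, delMS_powersetCard_singleton, erase_eq_of_notMem hxS]
      refine ih hH' ha hb ?_ hUV hUA (fun e he => hU e (mem_delMS_singleton.1 he).1) hcommon'
      simpa [erase_eq_of_notMem hxA] using hA.delMS_singleton_erase x

end Graph

/-- If `C` is a chordal graph (1-dimensional uniform clutter) and `F` is a
simplicial edge of `C` (i.e. `F ∈ SMS(C⁺)`), then the graph `C − F = C \ {F}` is chordal. -/
theorem chordal_graph_del_simplicial_edge (V : Finset α) (C : Finset (Finset α))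
    (hC : IsClutter V 2 C) (h : Chordal V 2 C)
    (F : Finset α) (hF : IsSMS V 3 (ascent V 2 C) F) :
    Chordal V 2 (C.erase F) := by
  obtain ⟨⟨hF2, T, hT, hFT⟩, hK⟩ := hF
  obtain ⟨hTV, hT3⟩ := Finset.mem_powersetCard.1 (Finset.mem_filter.1 hT).1
  have hA : IsClique V 2 C (closedNbhd V (ascent V 2 C) F) := hK.of_ascent <| by
    have := Finset.card_le_card (subset_closedNbhd_of_card_eq_succ hT hTV hFT (by omega))
    omega
  obtain ⟨a, b, hne, rfl⟩ := Finset.card_eq_two.1 (by omega : F.card = 2)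
  have ha : a ∈ closedNbhd V (ascent V 2 C) {a, b} := by simp [closedNbhd]
  have hb : b ∈ closedNbhd V (ascent V 2 C) {a, b} := by simp [closedNbhd]
  have hcommon : ∀ w, {w, a} ∈ C → {w, b} ∈ C → w ∈ closedNbhd V (ascent V 2 C) {a, b} :=
    fun w hwa hwb => Finset.mem_union_right _ <| Finset.mem_filter.2
      ⟨(hC _ hwa).1 (Finset.mem_insert_self w _),
        insert_mem_ascent_two hC hwa hwb (hA.pair_mem ha hb hne)⟩
  have := h.union_powersetCard_erase hC hne ha hb hA (Finset.empty_subset V)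
    (Finset.disjoint_empty_left _) (fun _ _ => Finset.disjoint_empty_left _) hcommon
  rwa [Finset.empty_union, Finset.union_eq_left.2 hA.powersetCard_subset] at this

end ClutterPaper
end

section
/- Assume the following two statements hold: (C) for every uniform clutter C′ such that C′^+ ≠ ∅, C′^+ is chordal, C′ − F is chordal for every F ∈ SMS(C′^+), and C′ − v is chordal for every vertex v of C′, one has SMS(C′) ≠ ∅; and (D′) every uniform clutter C′ with C′^+ = ∅ whose complement's circuits admit an admissible order has a free maximal subcircuit. Then every uniform clutter C with at least one circuit whose complement's circuits admit an admissible order satisfies SMS(C) ≠ ∅. -/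
namespace ClutterPaper

variable {α : Type*} [DecidableEq α]

/-!
Every clutter whose complement has linear quotients is in fact chordal; this is proved by
well-founded induction on `(|V|, |V| - d, |C|)`. The complements of the clutters that (C) requires
to be chordal again have linear quotients: the complement of `C⁺` consists of the `(d+2)`-sets
containing a non-circuit (keyed by the smallest rank of such a non-circuit), the complement of
`C − F` for `F ∈ SMS(C⁺)` gains the single set `F`, appended last, and that of `C − v` is the
restriction to the sets avoiding `v`. So (C), or (D′) when `C⁺ = ∅`, yields a simplicial maximal
subcircuit `e`. The complement of `C − e` gains the circuits through `e`, any two of which differ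
in one vertex, so it has linear quotients as well and `C − e` is chordal by induction.
-/

open Finset

section SetDifference

variable {G K A B : Finset α} {a l : α}

theorem subset_insert_of_sdiff_eq_singleton (h : K \ G = {l}) : K ⊆ insert l G := by
  rw [insert_eq, union_comm]
  exact sdiff_le_iff.1 h.le

theorem insert_sdiff_insert_eq_singleton (h : K \ G = {l}) (hl : l ∉ insert a G) :
    insert a K \ insert a G = {l} := by
  rw [insert_sdiff_insert, sdiff_insert, h, erase_eq_of_notMem]
  exact fun ha => hl (mem_singleton.1 ha ▸ mem_insert_self a G)

theorem insert_sdiff_eq_singleton (hK : K ⊆ G) (hl : l ∉ G) : insert l K \ G = {l} := by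
  rw [insert_sdiff_of_notMem _ hl, sdiff_eq_empty_iff_subset.2 hK]
  rfl

theorem insert_eq_of_subset_of_card (hKG : K ⊆ G) (hG : G.card = K.card + 1) (hl : l ∈ G)
    (hlK : l ∉ K) : insert l K = G :=
  eq_of_subset_of_card_le (insert_subset hl hKG) (by rw [card_insert_of_notMem hlK, hG])

theorem exists_sdiff_eq_singleton (hGA : G ⊆ A) (hGB : G ⊆ B) (hB : B.card = G.card + 1)
    (hAB : A.card ≤ B.card) (hne : A ≠ B) : ∃ l, B \ A = {l} := by
  refine card_eq_one.1 (le_antisymm ?_ ?_)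
  · calc (B \ A).card ≤ (B \ G).card := card_le_card (sdiff_subset_sdiff subset_rfl hGA)
      _ = 1 := by rw [card_sdiff_of_subset hGB]; omega
  · refine card_pos.2 (sdiff_nonempty.2 fun hBA => hne ?_)
    exact (eq_of_subset_of_card_le hBA hAB).symm

end SetDifference

section AdmissibleOrder

variable {β : Type*} [LinearOrder β]

def IsAdmissibleRank (D : Finset (Finset α)) (ρ : Finset α → β) : Prop :=
  ∀ A ∈ D, ∀ B ∈ D, ρ B < ρ A → ∃ l ∈ B \ A, ∃ K ∈ D, ρ K < ρ A ∧ K \ A = {l}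

theorem hasAdmissibleOrder_of_rank {D : Finset (Finset α)} (ρ : Finset α → β)
    (hinj : Set.InjOn ρ D) (hρ : IsAdmissibleRank D ρ) : HasAdmissibleOrder D := by
  classical
  set r := (D.image ρ).orderEmbOfFin rfl
  have hpre : ∀ i, ∃ G ∈ (D : Set (Finset α)), ρ G = r i := fun i =>
    mem_image.1 ((D.image ρ).orderEmbOfFin_mem rfl i)
  obtain rfl | ⟨⟨G₀, -⟩⟩ := D.eq_empty_or_nonempty
  · exact ⟨0, Fin.elim0, fun i => i.elim0, by simp, fun i => i.elim0⟩
  set F := fun i => Function.invFunOn ρ (D : Set (Finset α)) (r i)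
  have hFD : ∀ i, F i ∈ D := fun i => Function.invFunOn_mem (hpre i)
  have hFρ : ∀ i, ρ (F i) = r i := fun i => Function.invFunOn_eq (hpre i)
  have hlt : ∀ i j, ρ (F i) < ρ (F j) ↔ i < j := fun i j => by rw [hFρ, hFρ, r.lt_iff_lt]
  have hsurj : ∀ G ∈ D, ∃ i, F i = G := fun G hG => by
    obtain ⟨i, hi⟩ : ρ G ∈ Set.range r := by
      rw [Finset.range_orderEmbOfFin]; exact mem_coe.2 (mem_image_of_mem ρ hG)
    exact ⟨i, hinj (hFD i) hG (by rw [hFρ, hi])⟩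
  refine ⟨_, F, fun i j hij => r.injective (by rw [← hFρ, ← hFρ, hij]),
    fun G => ⟨hsurj G, fun ⟨i, hi⟩ => hi ▸ hFD i⟩, fun i j hji => ?_⟩
  obtain ⟨l, hl, K, hK, hKi, hKd⟩ := hρ (F i) (hFD i) (F j) (hFD j) ((hlt j i).2 hji)
  obtain ⟨k, rfl⟩ := hsurj K hK
  exact ⟨l, hl, k, (hlt k i).1 hKi, hKd⟩

theorem HasAdmissibleOrder.exists_rank {D : Finset (Finset α)} (h : HasAdmissibleOrder D) :
    ∃ ρ : Finset α → ℕ, Set.InjOn ρ D ∧ IsAdmissibleRank D ρ := by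
  classical
  obtain ⟨t, F, hinj, hmem, hadm⟩ := h
  set ρ : Finset α → ℕ := fun G => if h : ∃ i, F i = G then (h.choose : ℕ) else 0
  have hρ : ∀ i, ρ (F i) = i := fun i => by
    have h : ∃ j, F j = F i := ⟨i, rfl⟩
    simp only [ρ, dif_pos h]
    exact congrArg Fin.val (hinj h.choose_spec)
  refine ⟨ρ, fun G hG H hH hGH => ?_, fun A hA B hB hBA => ?_⟩
  · obtain ⟨i, rfl⟩ := (hmem G).1 hG
    obtain ⟨j, rfl⟩ := (hmem H).1 hH
    rw [hρ, hρ] at hGH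
    rw [Fin.ext hGH]
  · obtain ⟨i, rfl⟩ := (hmem A).1 hA
    obtain ⟨j, rfl⟩ := (hmem B).1 hB
    rw [hρ, hρ] at hBA
    obtain ⟨l, hl, k, hki, hkd⟩ := hadm i j hBA
    exact ⟨l, hl, F k, (hmem _).2 ⟨k, rfl⟩, by rwa [hρ, hρ], hkd⟩

/-- Ties of the key are broken arbitrarily. -/
theorem hasAdmissibleOrder_of_key {D : Finset (Finset α)} (κ : Finset α → β)
    (hκ : IsAdmissibleRank D κ)
    (heq : ∀ A ∈ D, ∀ B ∈ D, κ B = κ A → A ≠ B → ∃ l, B \ A = {l}) :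
    HasAdmissibleOrder D := by
  refine hasAdmissibleOrder_of_rank (fun A => toLex (κ A, D.toList.idxOf A))
    (fun A hA B _ hAB => (List.idxOf_inj (mem_toList.2 hA)).1 (congrArg (·.2) hAB)) ?_
  intro A hA B hB hBA
  rcases Prod.Lex.toLex_lt_toLex.1 hBA with hlt | ⟨hκBA, hidx⟩
  · obtain ⟨l, hl, K, hK, hKA, hKd⟩ := hκ A hA B hB hlt
    exact ⟨l, hl, K, hK, Prod.Lex.toLex_lt_toLex.2 (Or.inl hKA), hKd⟩
  · obtain ⟨l, hl⟩ := heq A hA B hB hκBA (by rintro rfl; exact hidx.false)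
    exact ⟨l, hl ▸ mem_singleton_self l, B, hB, hBA, hl⟩

theorem HasAdmissibleOrder.filter_notMem {D : Finset (Finset α)} (h : HasAdmissibleOrder D)
    (v : α) : HasAdmissibleOrder (D.filter (v ∉ ·)) := by
  obtain ⟨ρ, hinj, hρ⟩ := h.exists_rank
  refine hasAdmissibleOrder_of_rank ρ (hinj.mono (coe_subset.2 (filter_subset _ _)))
    fun A hA B hB hBA => ?_
  rw [mem_filter] at hA hB
  obtain ⟨l, hl, K, hK, hKA, hKd⟩ := hρ A hA.1 B hB.1 hBA
  refine ⟨l, hl, K, mem_filter.2 ⟨hK, fun hvK => ?_⟩, hKA, hKd⟩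
  have hvl : v ∈ K \ A := mem_sdiff.2 ⟨hvK, hA.2⟩
  rw [hKd, mem_singleton] at hvl
  exact hB.2 (hvl ▸ (mem_sdiff.1 hl).1)

/-- The sets of `N` are ranked after those of `D`, all with the same key. -/
theorem HasAdmissibleOrder.union {D N : Finset (Finset α)} (hD : HasAdmissibleOrder D)
    (hattach : ∀ G ∈ N, ∀ H ∈ D, ∃ l ∈ H \ G, ∃ K ∈ D, K \ G = {l})
    (hN : ∀ G ∈ N, ∀ H ∈ N, G ≠ H → ∃ l, H \ G = {l}) : HasAdmissibleOrder (D ∪ N) := by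
  obtain ⟨ρ, hinj, hρ⟩ := hD.exists_rank
  set κ : Finset α → ℕ∞ := fun H => if H ∈ D then ρ H else ⊤
  have hκD : ∀ H ∈ D, κ H = ρ H := fun H hH => if_pos hH
  have hκN : ∀ H ∉ D, κ H = ⊤ := fun H hH => if_neg hH
  refine hasAdmissibleOrder_of_key κ (fun A hA B hB hBA => ?_) fun A hA B hB hBA hne => ?_
  · have hBD : B ∈ D := by
      by_contra hBD
      rw [hκN B hBD] at hBA
      exact not_top_lt hBA
    by_cases hAD : A ∈ D
    · rw [hκD A hAD, hκD B hBD, Nat.cast_lt] at hBA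
      obtain ⟨l, hl, K, hK, hKA, hKd⟩ := hρ A hAD B hBD hBA
      exact ⟨l, hl, K, mem_union_left _ hK, by rwa [hκD K hK, hκD A hAD, Nat.cast_lt],
        hKd⟩
    · obtain ⟨l, hl, K, hK, hKd⟩ := hattach A ((mem_union.1 hA).resolve_left hAD) B hBD
      exact ⟨l, hl, K, mem_union_left _ hK, by simp [hκD K hK, hκN A hAD], hKd⟩
  · by_cases hAD : A ∈ D
    · have hBD : B ∈ D := by
        by_contra hBD
        simp [hκN B hBD, hκD A hAD] at hBA
      rw [hκD A hAD, hκD B hBD, Nat.cast_inj] at hBA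
      exact absurd (hinj hAD hBD hBA.symm) hne
    · have hBD : B ∉ D := fun hBD => by simp [hκD B hBD, hκN A hAD] at hBA
      exact hN A ((mem_union.1 hA).resolve_left hAD) B ((mem_union.1 hB).resolve_left hBD) hne

noncomputable def minRank (D : Finset (Finset α)) (ρ : Finset α → ℕ) (A : Finset α) : ℕ∞ :=
  (D.filter (· ⊆ A)).inf fun G => (ρ G : ℕ∞)

theorem minRank_le {D : Finset (Finset α)} {ρ : Finset α → ℕ} {A G : Finset α} (hG : G ∈ D)
    (hGA : G ⊆ A) : minRank D ρ A ≤ ρ G :=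
  inf_le (f := fun G => (ρ G : ℕ∞)) (mem_filter.2 ⟨hG, hGA⟩)

theorem exists_minRank_eq {D : Finset (Finset α)} (ρ : Finset α → ℕ) {A : Finset α}
    (h : ∃ G ∈ D, G ⊆ A) : ∃ G ∈ D, G ⊆ A ∧ minRank D ρ A = ρ G := by
  obtain ⟨G₀, hG₀, hG₀A⟩ := h
  obtain ⟨G, hG, hρG⟩ :=
    exists_mem_eq_inf (D.filter (· ⊆ A)) ⟨G₀, mem_filter.2 ⟨hG₀, hG₀A⟩⟩ fun G => (ρ G : ℕ∞)
  exact ⟨G, (mem_filter.1 hG).1, (mem_filter.1 hG).2, hρG⟩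

theorem HasAdmissibleOrder.supersets {V : Finset α} {c : ℕ} {D : Finset (Finset α)}
    (hD : IsClutter V c D) (h : HasAdmissibleOrder D) :
    HasAdmissibleOrder ((V.powersetCard (c + 1)).filter fun A => ∃ G ∈ D, G ⊆ A) := by
  obtain ⟨ρ, hinj, hρ⟩ := h.exists_rank
  have hD' : ∀ A ∈ (V.powersetCard (c + 1)).filter fun A => ∃ G ∈ D, G ⊆ A,
      A ⊆ V ∧ A.card = c + 1 ∧ ∃ G ∈ D, G ⊆ A ∧ minRank D ρ A = ρ G := fun A hA => by
    obtain ⟨hA, hAD⟩ := mem_filter.1 hA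
    exact ⟨(mem_powersetCard.1 hA).1, (mem_powersetCard.1 hA).2, exists_minRank_eq ρ hAD⟩
  refine hasAdmissibleOrder_of_key (minRank D ρ) (fun A hA B hB hBA => ?_)
    fun A hA B hB hBA hne => ?_
  · obtain ⟨hAV, hAc, GA, hGA, hGAA, hρA⟩ := hD' A hA
    obtain ⟨-, -, GB, hGB, hGBB, hρB⟩ := hD' B hB
    rw [hρA, hρB, Nat.cast_lt] at hBA
    obtain ⟨l, hl, K, hK, hKA, hKd⟩ := hρ GA hGA GB hGB hBA
    obtain ⟨a, haGA, rfl⟩ := exists_eq_insert_iff.2 ⟨hGAA, by rw [hAc, (hD GA hGA).2]⟩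
    have hKA : (ρ K : ℕ∞) < minRank D ρ (insert a GA) := by rwa [hρA, Nat.cast_lt]
    have hlA : l ∉ insert a GA := fun hlA => (minRank_le hK
      ((subset_insert_of_sdiff_eq_singleton hKd).trans (insert_subset hlA (subset_insert a GA)))
      ).not_gt hKA
    have haK : a ∉ K := fun haK => by
      rcases mem_insert.1 (subset_insert_of_sdiff_eq_singleton hKd haK) with rfl | haGA'
      · exact hlA (mem_insert_self a GA)
      · exact haGA haGA'
    refine ⟨l, mem_sdiff.2 ⟨hGBB (mem_sdiff.1 hl).1, hlA⟩, insert a K,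
      mem_filter.2 ⟨?_, K, hK, subset_insert a K⟩, (minRank_le hK (subset_insert a K)).trans_lt hKA,
      insert_sdiff_insert_eq_singleton hKd hlA⟩
    refine mem_powersetCard.2 ⟨insert_subset (hAV (mem_insert_self a GA)) (hD K hK).1, ?_⟩
    rw [card_insert_of_notMem haK, (hD K hK).2]
  · obtain ⟨-, hAc, GA, hGA, hGAA, hρA⟩ := hD' A hA
    obtain ⟨-, hBc, GB, hGB, hGBB, hρB⟩ := hD' B hB
    rw [hρA, hρB, Nat.cast_inj] at hBA
    obtain rfl := hinj hGB hGA hBA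
    exact exists_sdiff_eq_singleton hGAA hGBB (by rw [hBc, (hD GB hGB).2]) (hAc.trans hBc.symm).le
      hne

end AdmissibleOrder

section Clutter

variable {V : Finset α} {c : ℕ} {C : Finset (Finset α)} {e F H : Finset α}

theorem mem_compClutter : H ∈ compClutter V c C ↔ H ⊆ V ∧ H.card = c ∧ H ∉ C := by
  simp [compClutter, mem_powersetCard, and_assoc]

theorem isClutter_compClutter : IsClutter V c (compClutter V c C) := fun _ hH =>
  ⟨(mem_compClutter.1 hH).1, (mem_compClutter.1 hH).2.1⟩

theorem mem_ascent : H ∈ ascent V c C ↔ IsClique V c C H ∧ H.card = c + 1 := by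
  simp only [ascent, mem_filter, mem_powersetCard, IsClique]
  constructor
  · rintro ⟨⟨hHV, hHc⟩, hH⟩
    exact ⟨⟨hHV, fun G hG hGc => hH (mem_powersetCard.2 ⟨hG, hGc⟩)⟩, hHc⟩
  · rintro ⟨⟨hHV, hH⟩, hHc⟩
    exact ⟨⟨hHV, hHc⟩, fun G hG => hH G (mem_powersetCard.1 hG).1 (mem_powersetCard.1 hG).2⟩

theorem isClutter_ascent : IsClutter V (c + 1) (ascent V c C) := fun _ hH =>
  ⟨(mem_ascent.1 hH).1.1, (mem_ascent.1 hH).2⟩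

theorem IsClutter.delVert (hC : IsClutter V c C) (v : α) :
    IsClutter (V.erase v) c (delVert C v) := fun F hF => by
  rw [ClutterPaper.delVert, mem_filter] at hF
  exact ⟨subset_erase.2 ⟨(hC F hF.1).1, hF.2⟩, (hC F hF.1).2⟩

theorem subset_closedNbhd (hC : IsClutter V (e.card + 1) C) (hH : H ∈ C) (heH : e ⊆ H) :
    H ⊆ closedNbhd V C e := fun x hx => by
  by_cases hxe : x ∈ e
  · exact mem_union_left _ hxe
  · refine mem_union_right _ (mem_filter.2 ⟨(hC H hH).1 hx, ?_⟩)
    rwa [insert_eq_of_subset_of_card heH (hC H hH).2 hx hxe]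

theorem IsFreeMS.isSMS (hC : IsClutter V c C) (h : IsFreeMS c C e) : IsSMS V c C e := by
  obtain ⟨he, F, ⟨hF, heF⟩, huniq⟩ := h
  have hNF : closedNbhd V C e ⊆ F := fun x hx => by
    rcases mem_union.1 hx with hx | hx
    · exact heF hx
    · rw [← huniq _ ⟨(mem_filter.1 hx).2, subset_insert x e⟩]
      exact mem_insert_self x e
  refine ⟨⟨he, F, hF, heF⟩, hNF.trans (hC F hF).1, fun G hG hGc => ?_⟩
  rwa [eq_of_subset_of_card_le (hG.trans hNF) (by rw [hGc, (hC F hF).2])]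

theorem Chordal.exists_isSMS (h : Chordal V c C) (hne : C.Nonempty) : ∃ e, IsSMS V c C e := by
  cases h with
  | empty => exact absurd hne not_nonempty_empty
  | step e he _ => exact ⟨e, he⟩

theorem compClutter_delVert (v : α) :
    compClutter (V.erase v) c (delVert C v) = (compClutter V c C).filter (v ∉ ·) := by
  ext H
  simp only [mem_compClutter, mem_filter, ClutterPaper.delVert, subset_erase]
  tauto

theorem compClutter_delMS (hC : IsClutter V c C) (e : Finset α) :
    compClutter V c (delMS C e) = compClutter V c C ∪ C.filter (e ⊆ ·) := by
  ext H
  simp only [mem_compClutter, delMS, mem_union, mem_filter]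
  have := hC H
  tauto

theorem compClutter_erase (hFV : F ⊆ V) (hFc : F.card = c) :
    compClutter V c (C.erase F) = compClutter V c C ∪ {F} := by
  ext H
  simp only [mem_compClutter, mem_union, mem_erase, mem_singleton]
  by_cases hHF : H = F
  · subst hHF
    tauto
  · tauto

theorem compClutter_ascent : compClutter V (c + 1) (ascent V c C) =
    (V.powersetCard (c + 1)).filter fun A => ∃ G ∈ compClutter V c C, G ⊆ A := by
  ext A
  rw [mem_compClutter, mem_ascent, mem_filter, mem_powersetCard, IsClique]
  constructor
  · rintro ⟨hAV, hAc, hA⟩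
    obtain ⟨G, hGA, hGc, hGC⟩ : ∃ G ⊆ A, G.card = c ∧ G ∉ C := by
      by_contra! h
      exact hA ⟨⟨hAV, h⟩, hAc⟩
    exact ⟨⟨hAV, hAc⟩, G, mem_compClutter.2 ⟨hGA.trans hAV, hGc, hGC⟩, hGA⟩
  · rintro ⟨⟨hAV, hAc⟩, G, hG, hGA⟩
    obtain ⟨-, hGc, hGC⟩ := mem_compClutter.1 hG
    exact ⟨hAV, hAc, fun h => hGC (h.1.2 G hGA hGc)⟩

end Clutter

section LinearQuotients

variable {V : Finset α} {c : ℕ} {C : Finset (Finset α)} {e F H : Finset α}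

theorem HasAdmissibleOrder.compClutter_delVert (h : HasAdmissibleOrder (compClutter V c C))
    (v : α) : HasAdmissibleOrder (compClutter (V.erase v) c (delVert C v)) := by
  rw [ClutterPaper.compClutter_delVert]
  exact h.filter_notMem v

theorem HasAdmissibleOrder.compClutter_ascent (h : HasAdmissibleOrder (compClutter V c C)) :
    HasAdmissibleOrder (compClutter V (c + 1) (ascent V c C)) := by
  rw [ClutterPaper.compClutter_ascent]
  exact h.supersets isClutter_compClutter

theorem IsSMS.exists_notMem_insert (hC : IsClutter V c C) (he : IsSMS V c C e) (hF : F ∈ C)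
    (heF : e ⊆ F) (hH : H ∈ compClutter V c C) : ∃ l ∈ H \ F, insert l e ∉ C := by
  obtain ⟨hHV, hHc, hHC⟩ := mem_compClutter.1 hH
  by_contra! hcon
  refine hHC (he.2.2 H (fun x hx => ?_) hHc)
  by_cases hxF : x ∈ F
  · exact subset_closedNbhd (he.1.1 ▸ hC) hF heF hxF
  · exact mem_union_right _ (mem_filter.2 ⟨hHV hx, hcon x (mem_sdiff.2 ⟨hx, hxF⟩)⟩)

theorem HasAdmissibleOrder.compClutter_delMS (hC : IsClutter V c C) (he : IsSMS V c C e)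
    (h : HasAdmissibleOrder (compClutter V c C)) :
    HasAdmissibleOrder (compClutter V c (delMS C e)) := by
  rw [ClutterPaper.compClutter_delMS hC]
  refine h.union (fun F hF H hH => ?_) fun F hF H hH hne => ?_
  · obtain ⟨hFC, heF⟩ := mem_filter.1 hF
    obtain ⟨l, hl, hlC⟩ := he.exists_notMem_insert hC hFC heF hH
    obtain ⟨hlH, hlF⟩ := mem_sdiff.1 hl
    have hle : l ∉ e := fun hle => hlF (heF hle)
    refine ⟨l, hl, insert l e, mem_compClutter.2 ⟨?_, ?_, hlC⟩, insert_sdiff_eq_singleton heF hlF⟩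
    · exact insert_subset ((mem_compClutter.1 hH).1 hlH) (heF.trans (hC F hFC).1)
    · rw [card_insert_of_notMem hle, he.1.1]
  · obtain ⟨hFC, heF⟩ := mem_filter.1 hF
    obtain ⟨hHC, heH⟩ := mem_filter.1 hH
    exact exists_sdiff_eq_singleton heF heH (by rw [(hC H hHC).2, he.1.1])
      (by rw [(hC H hHC).2, (hC F hFC).2]) hne

theorem IsMS.mem_of_ascent (hF : IsMS (c + 1) (ascent V c C) F) : F ∈ C ∧ F ⊆ V := by
  obtain ⟨hFc, A, hA, hFA⟩ := hF
  obtain ⟨⟨hAV, hAC⟩, -⟩ := mem_ascent.1 hA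
  exact ⟨hAC F hFA (by omega), hFA.trans hAV⟩

/-- The `c`-subsets of `insert l F` are `F` and the sets `insert l (F.erase m)`. -/
theorem insert_mem_ascent {l : α} (hFC : F ∈ C) (hFV : F ⊆ V) (hFc : F.card = c) (hlV : l ∈ V)
    (hlF : l ∉ F) (h : ∀ m ∈ F, insert l (F.erase m) ∈ C) : insert l F ∈ ascent V c C := by
  have hlFc : (insert l F).card = c + 1 := by rw [card_insert_of_notMem hlF, hFc]
  refine mem_ascent.2 ⟨⟨insert_subset hlV hFV, fun G hG hGc => ?_⟩, hlFc⟩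
  obtain ⟨m, hm⟩ : (insert l F \ G).Nonempty :=
    sdiff_nonempty.2 fun hlFG => by have := card_le_card hlFG; omega
  obtain ⟨hmlF, hmG⟩ := mem_sdiff.1 hm
  obtain rfl : G = (insert l F).erase m :=
    eq_of_subset_of_card_le (subset_erase.2 ⟨hG, hmG⟩) (by rw [card_erase_of_mem hmlF]; omega)
  rcases eq_or_ne m l with rfl | hml
  · rwa [erase_insert hlF]
  · rw [erase_insert_of_ne hml.symm]
    exact h m (mem_of_mem_insert_of_ne hmlF hml)

theorem IsClique.mem_of_ascent {N : Finset α} (hN : IsClique V (c + 1) (ascent V c C) N)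
    (hHN : H ⊆ N) (hHc : H.card = c) (hcN : c < N.card) : H ∈ C := by
  obtain ⟨x, hxN, hxH⟩ := exists_mem_notMem_of_card_lt_card (hHc.trans_lt hcN)
  have hxH' := hN.2 (insert x H) (insert_subset hxN hHN) (by rw [card_insert_of_notMem hxH, hHc])
  exact (mem_ascent.1 hxH').1.2 H (subset_insert x H) hHc

theorem IsSMS.exists_erase_insert_notMem (hF : IsSMS V (c + 1) (ascent V c C) F)
    (hH : H ∈ compClutter V c C) : ∃ l ∈ H \ F, ∃ m ∈ F, insert l (F.erase m) ∉ C := by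
  obtain ⟨hFC, hFV⟩ := hF.1.mem_of_ascent
  have hFc : F.card = c := by have := hF.1.1; omega
  obtain ⟨hHV, hHc, hHC⟩ := mem_compClutter.1 hH
  by_contra! hcon
  have hlN : ∀ l ∈ H \ F, insert l F ⊆ closedNbhd V (ascent V c C) F := fun l hl =>
    subset_closedNbhd (hFc ▸ isClutter_ascent)
      (insert_mem_ascent hFC hFV hFc (hHV (mem_sdiff.1 hl).1) (mem_sdiff.1 hl).2 (hcon l hl))
      (subset_insert l F)
  have hHN : H ⊆ closedNbhd V (ascent V c C) F := fun x hx => by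
    by_cases hxF : x ∈ F
    · exact mem_union_left _ hxF
    · exact hlN x (mem_sdiff.2 ⟨hx, hxF⟩) (mem_insert_self x F)
  obtain ⟨l, hl⟩ : (H \ F).Nonempty :=
    sdiff_nonempty.2 fun hHF => hHC (eq_of_subset_of_card_le hHF (by omega) ▸ hFC)
  refine hHC (hF.2.mem_of_ascent hHN hHc ?_)
  calc c < (insert l F).card := by rw [card_insert_of_notMem (mem_sdiff.1 hl).2]; omega
    _ ≤ _ := card_le_card (hlN l hl)

theorem HasAdmissibleOrder.compClutter_erase (hF : IsSMS V (c + 1) (ascent V c C) F)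
    (h : HasAdmissibleOrder (compClutter V c C)) :
    HasAdmissibleOrder (compClutter V c (C.erase F)) := by
  obtain ⟨-, hFV⟩ := hF.1.mem_of_ascent
  have hFc : F.card = c := by have := hF.1.1; omega
  rw [ClutterPaper.compClutter_erase hFV hFc]
  refine h.union (fun G hG H hH => ?_) fun G hG H hH hne => ?_
  · obtain rfl := mem_singleton.1 hG
    obtain ⟨l, hl, m, hm, hlm⟩ := hF.exists_erase_insert_notMem hH
    obtain ⟨hlH, hlG⟩ := mem_sdiff.1 hl
    refine ⟨l, hl, _, mem_compClutter.2 ⟨?_, ?_, hlm⟩,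
      insert_sdiff_eq_singleton (erase_subset m G) hlG⟩
    · exact insert_subset ((mem_compClutter.1 hH).1 hlH) ((erase_subset m G).trans hFV)
    · rw [card_insert_of_notMem fun h => hlG (mem_of_mem_erase h), card_erase_of_mem hm]
      have := card_pos.2 ⟨m, hm⟩
      omega
  · exact absurd ((mem_singleton.1 hG).trans (mem_singleton.1 hH).symm) hne

end LinearQuotients

/-- Statement (C). -/
def SMSOfChordalAscent (α : Type*) [DecidableEq α] : Prop :=
  ∀ (V : Finset α) (d : ℕ) (C : Finset (Finset α)),
    IsClutter V (d + 1) C → (ascent V (d + 1) C).Nonempty →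
    Chordal V (d + 2) (ascent V (d + 1) C) →
    (∀ F : Finset α, IsSMS V (d + 2) (ascent V (d + 1) C) F → Chordal V (d + 1) (C.erase F)) →
    (∀ v ∈ V, Chordal (V.erase v) (d + 1) (delVert C v)) →
    ∃ e, IsSMS V (d + 1) C e

/-- Statement (D′). -/
def FreeMSOfEmptyAscent (α : Type*) [DecidableEq α] : Prop :=
  ∀ (V : Finset α) (d : ℕ) (C : Finset (Finset α)),
    IsClutter V (d + 1) C → ascent V (d + 1) C = ∅ →
    HasAdmissibleOrder (compClutter V (d + 1) C) → ∃ e, IsFreeMS (d + 1) C e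

theorem chordal_of_hasAdmissibleOrder (hCstat : SMSOfChordalAscent α)
    (hDstat : FreeMSOfEmptyAscent α) (V : Finset α) (d : ℕ) (C : Finset (Finset α))
    (hC : IsClutter V (d + 1) C) (h : HasAdmissibleOrder (compClutter V (d + 1) C)) :
    Chordal V (d + 1) C := by
  obtain rfl | hne := C.eq_empty_or_nonempty
  · exact .empty
  obtain ⟨e, he⟩ : ∃ e, IsSMS V (d + 1) C e := by
    obtain hasc | hasc := (ascent V (d + 1) C).eq_empty_or_nonempty
    · obtain ⟨e, he⟩ := hDstat V d C hC hasc h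
      exact ⟨e, he.isSMS hC⟩
    refine hCstat V d C hC hasc ?_ (fun F hF => ?_) fun v hv => ?_
    · exact chordal_of_hasAdmissibleOrder hCstat hDstat V (d + 1) _ isClutter_ascent
        h.compClutter_ascent
    · exact chordal_of_hasAdmissibleOrder hCstat hDstat V d _
        (fun G hG => hC G (mem_of_mem_erase hG)) (h.compClutter_erase hF)
    · exact chordal_of_hasAdmissibleOrder hCstat hDstat (V.erase v) d _ (hC.delVert v)
        (h.compClutter_delVert v)
  exact .step e he (chordal_of_hasAdmissibleOrder hCstat hDstat V d _
    (fun G hG => hC G (mem_filter.1 hG).1) (h.compClutter_delMS hC he))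
termination_by (V.card, V.card - d, C.card)
decreasing_by
  · obtain ⟨F, hF⟩ := hne
    have hFV := card_le_card (hC F hF).1
    rw [(hC F hF).2] at hFV
    exact Prod.Lex.right _ (Prod.Lex.left _ _ (by omega))
  · exact Prod.Lex.right _ (Prod.Lex.right _ (card_erase_lt_of_mem hF.1.mem_of_ascent.1))
  · exact Prod.Lex.left _ _ (card_erase_lt_of_mem hv)
  · obtain ⟨F, hF, heF⟩ := he.1.2
    exact Prod.Lex.right _ (Prod.Lex.right _
      (card_lt_card (filter_ssubset.2 ⟨F, hF, not_not.2 heF⟩)))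

/-- Assuming (C): every uniform clutter `C'` with nonempty chordal ascent,
with `C' − F` chordal for all `F ∈ SMS(C'⁺)` and `C' − v` chordal for all vertices `v`, has
`SMS(C') ≠ ∅`; and (D′): every uniform clutter with empty ascent whose complement admits an
admissible order has a free maximal subcircuit; then every uniform clutter with at least one
circuit whose complement admits an admissible order has a simplicial maximal subcircuit. -/
theorem sms_nonempty_of_linear_quotients
    (hCstat : ∀ (V : Finset α) (d : ℕ) (C : Finset (Finset α)),
      IsClutter V (d + 1) C → (ascent V (d + 1) C).Nonempty →
      Chordal V (d + 2) (ascent V (d + 1) C) →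
      (∀ F : Finset α, IsSMS V (d + 2) (ascent V (d + 1) C) F →
        Chordal V (d + 1) (C.erase F)) →
      (∀ v ∈ V, Chordal (V.erase v) (d + 1) (delVert C v)) →
      ∃ e, IsSMS V (d + 1) C e)
    (hDstat : ∀ (V : Finset α) (d : ℕ) (C : Finset (Finset α)),
      IsClutter V (d + 1) C → ascent V (d + 1) C = ∅ →
      HasAdmissibleOrder (compClutter V (d + 1) C) →
      ∃ e, IsFreeMS (d + 1) C e) :
    ∀ (V : Finset α) (d : ℕ) (C : Finset (Finset α)),
      IsClutter V (d + 1) C → C.Nonempty →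
      HasAdmissibleOrder (compClutter V (d + 1) C) →
      ∃ e, IsSMS V (d + 1) C e :=
  fun V d C hC hne h => (chordal_of_hasAdmissibleOrder hCstat hDstat V d C hC h).exists_isSMS hne

end ClutterPaper
end
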